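/- In the group G_n = ⟨x₁, …, x_n | x_{i+1} x_i x_{i+1}⁻¹ = x_i² for 1 ≤ i ≤ n−1⟩, the element v_n = [g_n, x₁] is trivial, where g_n is the iterated conjugation element defined by y_n = x_n^n and y_i = y_{i+1} x_i y_{i+1}⁻¹ for i < n, with g_n = y₁. -/

import Mathlib

/-- Tower of exponentials: `tower 0 k = k`, `tower (n+1) k = 2 ^ tower n k`. -/
def tower : ℕ → ℕ → ℕ
  | 0, k => k
  | n + 1, k => 2 ^ tower n k

/-- The `i`-th generator (0-indexed) of the free group on `n` generators,
or `1` if `i` is out of range. -/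
def fgen (n i : ℕ) : FreeGroup (Fin n) :=
  if h : i < n then FreeGroup.of ⟨i, h⟩ else 1

/-- The relators of G_n = ⟨x₁, …, x_n | x_{i+1} x_i x_{i+1}⁻¹ = x_i², 1 ≤ i ≤ n−1⟩,
with x_{j+1} corresponding to the 0-indexed generator `fgen n j`. -/
def Grel (n : ℕ) : Set (FreeGroup (Fin n)) :=
  {w | ∃ i : ℕ, i + 1 < n ∧
    w = fgen n (i + 1) * fgen n i * (fgen n (i + 1))⁻¹ * (fgen n i ^ 2)⁻¹}

/-- The group G_n. -/
abbrev Gm (n : ℕ) := PresentedGroup (Grel n)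

/-- The 0-indexed generators of G_n (trivial when out of range). -/
def xg (n i : ℕ) : Gm n :=
  if h : i < n then PresentedGroup.of ⟨i, h⟩ else 1

/-- The downward recursive sequence: `zseq x n k 0 = x_{n-1}^k` (the top element `y_n`)
and `zseq x n k (j+1) = zseq x n k j * x (n-2-j) * (zseq x n k j)⁻¹`
(so `zseq x n k j = y_{n-1-j}` where `y_i = y_{i+1} x_i y_{i+1}⁻¹`). -/
def zseq {G : Type} [Group G] (x : ℕ → G) (n k : ℕ) : ℕ → G
  | 0 => x (n - 1) ^ k
  | j + 1 => zseq x n k j * x (n - 2 - j) * (zseq x n k j)⁻¹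

/-- g_k = y₁, the iterated conjugation x₁^{x₂^{⋯^{x_n^k}}}. -/
def gElt {G : Type} [Group G] (x : ℕ → G) (n k : ℕ) : G := zseq x n k (n - 1)

open scoped commutatorElement

/-! Conjugation by `x_{i+1}` squares `x_i`, so conjugation by `x_{i+1}^t` raises `x_i` to the
power `2^t`. Descending from `y_n = x_n^n`, every `y_i` is therefore a power of `x_i`; in
particular `g_n = y₁` is a power of `x₁` and commutes with it. -/

theorem conj_pow_eq_pow_pow {G : Type*} [Group G] {a b : G} {k : ℕ}
    (h : a * b * a⁻¹ = b ^ k) (m : ℕ) : a ^ m * b * (a ^ m)⁻¹ = b ^ k ^ m := by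
  induction m with
  | zero => simp
  | succ m ih =>
    calc a ^ (m + 1) * b * (a ^ (m + 1))⁻¹ = a * (a ^ m * b * (a ^ m)⁻¹) * a⁻¹ := by group
      _ = (a * b * a⁻¹) ^ k ^ m := by rw [ih, conj_pow]
      _ = b ^ k ^ (m + 1) := by rw [h, ← pow_mul, pow_succ']

theorem zseq_eq_pow_tower {G : Type} [Group G] {x : ℕ → G} {n : ℕ}
    (hx : ∀ i, i + 1 < n → x (i + 1) * x i * (x (i + 1))⁻¹ = x i ^ 2) (k : ℕ) :
    ∀ j, j ≤ n - 1 → zseq x n k j = x (n - 1 - j) ^ tower j k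
  | 0, _ => by simp [zseq, tower]
  | j + 1, hj => by
    have hi : n - 2 - j + 1 = n - 1 - j := by omega
    rw [zseq, zseq_eq_pow_tower hx k j (by omega), ← hi,
      conj_pow_eq_pow_pow (hx _ (by omega)), show n - 1 - (j + 1) = n - 2 - j by omega]
    rfl

theorem gElt_eq_pow_tower {G : Type} [Group G] {x : ℕ → G} {n : ℕ}
    (hx : ∀ i, i + 1 < n → x (i + 1) * x i * (x (i + 1))⁻¹ = x i ^ 2) (k : ℕ) :
    gElt x n k = x 0 ^ tower (n - 1) k := by
  rw [gElt, zseq_eq_pow_tower hx k (n - 1) le_rfl, Nat.sub_self]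

theorem mk_fgen (n i : ℕ) : PresentedGroup.mk (Grel n) (fgen n i) = xg n i := by
  unfold fgen xg
  split <;> rfl

theorem xg_conj_xg (n i : ℕ) (h : i + 1 < n) :
    xg n (i + 1) * xg n i * (xg n (i + 1))⁻¹ = xg n i ^ 2 := by
  simpa only [map_mul, map_inv, map_pow, mk_fgen] using
    PresentedGroup.mk_eq_mk_of_mul_inv_mem (rels := Grel n) ⟨i, h, rfl⟩

theorem stmt3_general (n : ℕ) :
    ⁅gElt (xg n) n n, xg n 0⁆ = (1 : Gm n) := by
  rw [gElt_eq_pow_tower (xg_conj_xg n) n]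
  exact ((Commute.refl _).pow_left _).commutator_eq

/-- In G_n, the element v_n = [g_n, x₁] is trivial, where g_n is the iterated
conjugation element with k = n. -/
theorem stmt3 (n : ℕ) (hn : 1 ≤ n) :
    ⁅gElt (xg n) n n, xg n 0⁆ = (1 : Gm n) :=
  stmt3_general n
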